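/- arXiv:1709.00607 — 2 statements merged into one kernel-verified Lean document; each statement's English description precedes it below -/
import Mathlib

section
/- Suppose m ≡ 2 (mod 4) and m + 1 ≡ 0 (mod 3), and set p = (m+1)/3. Let j* be the n-tuple with j*_(n−1) = p and all other entries 0. Then j* ∈ J, P(j*) ≠ 0, and V(j*) = 2p − s(p). -/
open Finset

/-- `s a` is the sum of the binary digits of `a`. -/
def sdig (a : ℕ) : ℕ := (Nat.digits 2 a).sum

/-- `carries a b` is the number of carries when adding `a` and `b` in base 2:
`c(a,b) = s(a) + s(b) - s(a+b)`. -/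
def carries (a b : ℕ) : ℕ := sdig a + sdig b - sdig (a + b)

/-- The generalized binomial coefficient `C_r(x) = x(x-1)⋯(x-r+1)/r!` (with `C_0(x) = 1`). -/
def genBinom (x : ℚ) (r : ℕ) : ℚ :=
  (∏ p ∈ Finset.range r, (x - p)) / (Nat.factorial r : ℚ)

/-- Membership in the index set `J`: here `j i` (for `i : Fin n`) is the paper's
`j_{i+1}`, so the defining relation `(2^n-1)j_1 + ⋯ + (2-1)j_n = m+1` becomes
`∑ k, (2^(n-k) - 1) * j k = m + 1`. -/
def inJ (n m : ℕ) (j : Fin n → ℕ) : Prop :=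
  ∑ k : Fin n, (2 ^ (n - (k : ℕ)) - 1) * j k = m + 1

/-- `α_j(k)`: for `K : Fin n`, `alphaF n m j K` is the paper's `α_j(K+1)`, i.e.
`m / 2^(n-K) - ∑_{I < K} 2^(K-I) j_{I+1}`. -/
def alphaF (n m : ℕ) (j : Fin n → ℕ) (K : Fin n) : ℚ :=
  (m : ℚ) / 2 ^ (n - (K : ℕ)) -
    ∑ I : Fin n, if (I : ℕ) < (K : ℕ) then 2 ^ ((K : ℕ) - (I : ℕ)) * (j I : ℚ) else 0

/-- `P(j) = ∏_{k=1}^n C_{j_k}(α_j(k))`. -/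
def Pprod (n m : ℕ) (j : Fin n → ℕ) : ℚ :=
  ∏ k : Fin n, genBinom (alphaF n m j k) (j k)

/-- `V(j) = -ν(P(j))`, where `ν` is the 2-adic valuation on `ℚ`. -/
def V (n m : ℕ) (j : Fin n → ℕ) : ℤ := - padicValRat 2 (Pprod n m j)

/-!
Only the factor of `P(j*)` at the nonzero entry `j*_(n-1) = p` is nontrivial, and there
`α = m/4 = (2t+1)/2` with `m = 4t+2`. Hence `C_p(α) = ∏_{i<p} (2t+1-2i) / (2^p p!)` has an odd
numerator, and Legendre's formula `ν(p!) = p - s(p)` gives `ν(C_p(α)) = -p - (p - s(p))`.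
Membership of `j*` in `J` is the identity `(2^2 - 1) p = m + 1`.
-/

open scoped Nat

@[simp]
lemma genBinom_zero (x : ℚ) : genBinom x 0 = 1 := by
  simp [genBinom]

section HalfOddInteger

variable (a : ℤ) (r : ℕ)

lemma not_two_dvd_prod_range_sub_two_mul : ¬ 2 ∣ ∏ i ∈ range r, (2 * a + 1 - 2 * i) :=
  Prime.not_dvd_finsetProd Int.prime_two fun i _ => by omega

lemma prod_range_sub_two_mul_ne_zero : ∏ i ∈ range r, (2 * a + 1 - 2 * i) ≠ 0 :=
  fun h => not_two_dvd_prod_range_sub_two_mul a r (h ▸ dvd_zero 2)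

lemma genBinom_half_odd :
    genBinom (((2 * a + 1 : ℤ) : ℚ) / 2) r =
      ((∏ i ∈ range r, (2 * a + 1 - 2 * i) : ℤ) : ℚ) / (2 ^ r * r !) := by
  have hfactor (i : ℕ) :
      ((2 * a + 1 : ℤ) : ℚ) / 2 - i = ((2 * a + 1 - 2 * i : ℤ) : ℚ) / 2 := by
    push_cast; ring
  rw [genBinom, prod_congr rfl fun i _ => hfactor i, prod_div_distrib, prod_const,
    card_range, div_div, Int.cast_prod]

lemma sdig_le : sdig r ≤ r :=
  Nat.digit_sum_le 2 r

lemma padicValNat_two_factorial : padicValNat 2 r ! = r - sdig r := by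
  simpa [sdig] using sub_one_mul_padicValNat_factorial (p := 2) r

lemma genBinom_half_odd_ne_zero : genBinom (((2 * a + 1 : ℤ) : ℚ) / 2) r ≠ 0 := by
  rw [genBinom_half_odd]
  have := prod_range_sub_two_mul_ne_zero a r
  positivity

lemma padicValRat_two_genBinom_half_odd :
    padicValRat 2 (genBinom (((2 * a + 1 : ℤ) : ℚ) / 2) r) = (sdig r : ℤ) - 2 * r := by
  have hQ := prod_range_sub_two_mul_ne_zero a r
  have h2 : padicValRat 2 (2 : ℚ) = 1 := by exact_mod_cast padicValRat.self (p := 2) one_lt_two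
  have hvQ : padicValRat 2 (∏ i ∈ range r, (2 * a + 1 - 2 * i) : ℤ) = 0 := by
    rw [padicValRat.of_int, padicValInt.eq_zero_of_not_dvd
      (not_two_dvd_prod_range_sub_two_mul a r), Nat.cast_zero]
  rw [genBinom_half_odd, padicValRat.div (by exact_mod_cast hQ) (by positivity),
    padicValRat.mul (by positivity) (by positivity), padicValRat.pow, h2, hvQ,
    padicValRat.of_nat, padicValNat_two_factorial, Nat.cast_sub (sdig_le r)]
  ring

end HalfOddInteger

section SupportedAtOneIndex

variable {n m : ℕ} {j : Fin n → ℕ} {K : Fin n}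

lemma inJ_iff_of_eq_zero (hj : ∀ k ≠ K, j k = 0) :
    inJ n m j ↔ (2 ^ (n - (K : ℕ)) - 1) * j K = m + 1 := by
  rw [inJ, Fintype.sum_eq_single K fun k hk => by rw [hj k hk, mul_zero]]

lemma alphaF_eq_of_eq_zero (hj : ∀ I < K, j I = 0) :
    alphaF n m j K = (m : ℚ) / 2 ^ (n - (K : ℕ)) := by
  rw [alphaF, sub_eq_self]
  refine Finset.sum_eq_zero fun I _ => ?_
  split_ifs with h
  · rw [hj I h, Nat.cast_zero, mul_zero]
  · rfl

lemma Pprod_eq_of_eq_zero (hj : ∀ k ≠ K, j k = 0) :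
    Pprod n m j = genBinom ((m : ℚ) / 2 ^ (n - (K : ℕ))) (j K) := by
  rw [Pprod, Fintype.prod_eq_single K fun k hk => by rw [hj k hk, genBinom_zero],
    alphaF_eq_of_eq_zero fun I hI => hj I hI.ne]

end SupportedAtOneIndex

theorem stmt17_general (n m : ℕ) (hn : 3 ≤ n)
    (h4 : m % 4 = 2) (h3 : (m + 1) % 3 = 0)
    (p : ℕ) (hp : p = (m + 1) / 3)
    (jst : Fin n → ℕ)
    (hjst : jst = fun k : Fin n => if (k : ℕ) = n - 2 then p else 0) :
    inJ n m jst ∧ Pprod n m jst ≠ 0 ∧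
      V n m jst = (2 * p : ℤ) - sdig p := by
  set K : Fin n := ⟨n - 2, by omega⟩
  have hnK : n - (K : ℕ) = 2 := by simp only [K]; omega
  have hjK : jst K = p := by simp [hjst, K]
  have hj : ∀ k ≠ K, jst k = 0 := fun k hk => by
    simp only [hjst, ite_eq_right_iff]
    exact fun h => absurd (Fin.ext h) hk
  obtain ⟨t, ht⟩ : ∃ t, m = 4 * t + 2 := ⟨m / 4, by omega⟩
  have hP : Pprod n m jst = genBinom (((2 * t + 1 : ℤ) : ℚ) / 2) p := by
    rw [Pprod_eq_of_eq_zero hj, hjK, hnK, ht]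
    congr 1; push_cast; ring
  refine ⟨(inJ_iff_of_eq_zero hj).2 (by rw [hnK, hjK]; omega),
    hP ▸ genBinom_half_odd_ne_zero _ p, ?_⟩
  rw [V, hP, padicValRat_two_genBinom_half_odd]
  ring

/-- If `m ≡ 2 mod 4`, `m + 1 ≡ 0 mod 3` and `p = (m+1)/3`, then the tuple
`j* = (0, …, 0, p, 0)` lies in `J`, `P(j*) ≠ 0`, and `V(j*) = 2p - s(p)`. -/
theorem stmt17 (n m : ℕ) (hn : 3 ≤ n) (hm : 1 ≤ m) (hmn : m ≤ 2 ^ (n + 1) - 3)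
    (h4 : m % 4 = 2) (h3 : (m + 1) % 3 = 0)
    (p : ℕ) (hp : p = (m + 1) / 3)
    (jst : Fin n → ℕ)
    (hjst : jst = fun k : Fin n => if (k : ℕ) = n - 2 then p else 0) :
    inJ n m jst ∧ Pprod n m jst ≠ 0 ∧
      V n m jst = (2 * p : ℤ) - sdig p :=
  stmt17_general n m hn h4 h3 p hp jst hjst
end

section
/- Suppose m ≡ 22 (mod 24). Then j‴ ∈ J, P(j‴) ≠ 0, and V(j‴) = (2/3)(m−1) − s((m−1)/3) − 1. -/
open Finset

/-!
Write `m = 24t + 22`. Then `j‴` has entries `1, r, 1` with `r = 8t + 5` in its last three places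
and `P(j‴) = (m/8) · C_r(m/4 - 2) · (m/2 - 4 - 2r)`, where `m/8 = (12t + 11)/2²`,
`m/4 - 2 = (12t + 7)/2` and `m/2 - 4 - 2r = -(4t + 3)`.
If `ν(x) < 0`, every factor `x - k` of the numerator of `C_r(x)` has valuation `ν(x)`, so
Legendre's formula `ν(r!) = r - s(r)` gives `ν(C_r(x)) = r ν(x) - r + s(r)`.
Hence `V(j‴) = 2 + 2r - s(r) = 16t + 10 - s(t)`, and since `(m - 1)/3 = 8t + 7` this is
`2(m - 1)/3 - s((m - 1)/3) - 1`.
-/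

@[to_additive]
theorem Fintype.prod_eq_mul_mul {α M : Type*} [Fintype α] [DecidableEq α] [CommMonoid M]
    {f : α → M} (a b c : α) (hab : a ≠ b) (hac : a ≠ c) (hbc : b ≠ c)
    (h : ∀ x, x ≠ a → x ≠ b → x ≠ c → f x = 1) :
    ∏ x, f x = f a * f b * f c := by
  rw [← Finset.prod_subset (Finset.subset_univ {a, b, c}) fun x _ hx => by
    simp only [Finset.mem_insert, Finset.mem_singleton, not_or] at hx
    exact h x hx.1 hx.2.1 hx.2.2]
  rw [Finset.prod_insert (by simp [hab, hac]), Finset.prod_insert (by simp [hbc]),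
    Finset.prod_singleton, mul_assoc]

theorem genBinom_one (x : ℚ) : genBinom x 1 = x := by
  simp [genBinom]

def tailVec (n x y z : ℕ) : Fin n → ℕ := fun k =>
  if (k : ℕ) = n - 3 then x else if (k : ℕ) = n - 2 then y else if (k : ℕ) = n - 1 then z else 0

section tailVec

variable {n : ℕ} {x y z : ℕ}

@[to_additive]
theorem prod_tailVec {M : Type*} [CommMonoid M] (hn : 3 ≤ n) (f : Fin n → ℕ → M)
    (hf : ∀ k, f k 0 = 1) :
    ∏ k, f k (tailVec n x y z k) =
      f ⟨n - 3, by omega⟩ x * f ⟨n - 2, by omega⟩ y * f ⟨n - 1, by omega⟩ z := by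
  let a : Fin n := ⟨n - 3, by omega⟩
  let b : Fin n := ⟨n - 2, by omega⟩
  let c : Fin n := ⟨n - 1, by omega⟩
  rw [Fintype.prod_eq_mul_mul a b c (Fin.ne_of_val_ne (show n - 3 ≠ n - 2 by omega))
    (Fin.ne_of_val_ne (show n - 3 ≠ n - 1 by omega)) (Fin.ne_of_val_ne (show n - 2 ≠ n - 1 by omega))]
  · simp (disch := omega) [a, b, c, tailVec, if_neg]
  · intro k ha hb hc
    rw [tailVec, if_neg (Fin.val_ne_of_ne ha), if_neg (Fin.val_ne_of_ne hb),
      if_neg (Fin.val_ne_of_ne hc), hf]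

theorem inJ_tailVec_iff (hn : 3 ≤ n) (m : ℕ) :
    inJ n m (tailVec n x y z) ↔ 7 * x + 3 * y + z = m + 1 := by
  rw [inJ, sum_tailVec hn (fun k v => (2 ^ (n - (k : ℕ)) - 1) * v) (fun _ => mul_zero _)]
  simp only [Nat.sub_sub_self (by omega : 3 ≤ n), Nat.sub_sub_self (by omega : 2 ≤ n),
    Nat.sub_sub_self (by omega : 1 ≤ n)]
  norm_num

theorem alphaF_tailVec (hn : 3 ≤ n) (m : ℕ) (K : Fin n) :
    alphaF n m (tailVec n x y z) K = m / 2 ^ (n - (K : ℕ)) -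
      ((if n - 3 < (K : ℕ) then 2 ^ ((K : ℕ) - (n - 3)) * (x : ℚ) else 0) +
        (if n - 2 < (K : ℕ) then 2 ^ ((K : ℕ) - (n - 2)) * (y : ℚ) else 0) +
        (if n - 1 < (K : ℕ) then 2 ^ ((K : ℕ) - (n - 1)) * (z : ℚ) else 0)) := by
  rw [alphaF, sum_tailVec hn (fun I v => if (I : ℕ) < K then 2 ^ ((K : ℕ) - I) * (v : ℚ) else 0)
    (fun _ => by simp)]

theorem Pprod_tailVec (hn : 3 ≤ n) (m : ℕ) :
    Pprod n m (tailVec n x y z) =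
      genBinom (m / 8) x * genBinom (m / 4 - 2 * x) y * genBinom (m / 2 - 4 * x - 2 * y) z := by
  rw [Pprod, prod_tailVec hn (fun k v => genBinom (alphaF n m _ k) v) fun _ => by simp [genBinom]]
  simp only [alphaF_tailVec hn]
  simp (disch := omega) only [Nat.sub_sub_self, if_pos, if_neg, show n - 2 - (n - 3) = 1 by omega,
    show n - 1 - (n - 3) = 2 by omega, show n - 1 - (n - 2) = 1 by omega]
  ring_nf

end tailVec

theorem sdig_two_mul_add_one (t : ℕ) : sdig (2 * t + 1) = sdig t + 1 := by
  rw [sdig, Nat.digits_def' one_lt_two (by omega)]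
  simp [sdig, Nat.add_mul_div_left, add_comm]

theorem sdig_two_mul (t : ℕ) : sdig (2 * t) = sdig t := by
  rcases Nat.eq_zero_or_pos t with rfl | ht
  · rfl
  rw [sdig, Nat.digits_def' one_lt_two (by omega)]
  simp [sdig]

theorem sdig_eight_mul_add_five (t : ℕ) : sdig (8 * t + 5) = sdig t + 2 := by
  rw [show 8 * t + 5 = 2 * (2 * (2 * t + 1)) + 1 by ring, sdig_two_mul_add_one, sdig_two_mul,
    sdig_two_mul_add_one]

theorem sdig_eight_mul_add_seven (t : ℕ) : sdig (8 * t + 7) = sdig t + 3 := by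
  rw [show 8 * t + 7 = 2 * (2 * (2 * t + 1) + 1) + 1 by ring, sdig_two_mul_add_one,
    sdig_two_mul_add_one, sdig_two_mul_add_one]

theorem padicValRat_prod {p : ℕ} [Fact p.Prime] {ι : Type*} (s : Finset ι) {f : ι → ℚ}
    (hf : ∀ i ∈ s, f i ≠ 0) :
    padicValRat p (∏ i ∈ s, f i) = ∑ i ∈ s, padicValRat p (f i) := by
  classical
  induction s using Finset.cons_induction with
  | empty => simp
  | cons a s ha ih =>
    rw [Finset.forall_mem_cons] at hf
    rw [Finset.prod_cons, Finset.sum_cons, padicValRat.mul hf.1 (Finset.prod_ne_zero_iff.2 hf.2),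
      ih hf.2]

theorem ne_zero_of_padicValRat_neg {p : ℕ} {x : ℚ} (hx : padicValRat p x < 0) : x ≠ 0 := by
  rintro rfl
  simp at hx

theorem padicValRat_sub_natCast_of_neg {p : ℕ} [Fact p.Prime] {x : ℚ} (hx : padicValRat p x < 0)
    (k : ℕ) : padicValRat p (x - k) = padicValRat p x := by
  rcases Nat.eq_zero_or_pos k with rfl | hk
  · simp
  have hk_val : padicValRat p x < padicValRat p (-(k : ℚ)) := by
    rw [padicValRat.neg, padicValRat.of_nat]
    omega
  rw [sub_eq_add_neg]
  refine padicValRat.add_eq_of_lt ?_ (ne_zero_of_padicValRat_neg hx) (by simp; omega) hk_val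
  rw [← sub_eq_add_neg, sub_ne_zero]
  rintro rfl
  rw [padicValRat.of_nat] at hx
  omega

theorem padicValRat_two_genBinom_of_neg {x : ℚ} (hx : padicValRat 2 x < 0) (r : ℕ) :
    genBinom x r ≠ 0 ∧ padicValRat 2 (genBinom x r) = r * padicValRat 2 x - r + sdig r := by
  have hfac : ∀ k ∈ Finset.range r, x - k ≠ 0 := fun k _ =>
    ne_zero_of_padicValRat_neg (by rwa [padicValRat_sub_natCast_of_neg hx])
  have hnum : ∏ k ∈ Finset.range r, (x - k) ≠ 0 := Finset.prod_ne_zero_iff.2 hfac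
  have hden : (r.factorial : ℚ) ≠ 0 := by positivity
  have hlegendre : padicValRat 2 (r.factorial : ℚ) = r - sdig r := by
    have h : padicValNat 2 r.factorial = r - sdig r := by
      simpa [sdig] using sub_one_mul_padicValNat_factorial (p := 2) r
    have hle : sdig r ≤ r := Nat.digit_sum_le 2 r
    rw [padicValRat.of_nat, h, Nat.cast_sub hle]
  refine ⟨div_ne_zero hnum hden, ?_⟩
  rw [genBinom, padicValRat.div hnum hden, padicValRat_prod _ hfac, hlegendre,
    Finset.sum_congr rfl fun k _ => padicValRat_sub_natCast_of_neg hx k]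
  simp
  ring

theorem padicValRat_two_of_odd {z : ℤ} (hz : Odd z) : padicValRat 2 z = 0 := by
  rw [padicValRat.of_int,
    padicValInt.eq_zero_of_not_dvd (Int.not_even_iff_odd.2 hz ∘ even_iff_two_dvd.2), Nat.cast_zero]

theorem padicValRat_two_odd_div_two_pow {z : ℤ} (hz : Odd z) (k : ℕ) :
    padicValRat 2 (z / 2 ^ k) = -k := by
  have hz0 : (z : ℚ) ≠ 0 := Int.cast_ne_zero.2 (by rintro rfl; simp at hz)
  rw [padicValRat.div hz0 (by positivity), padicValRat_two_of_odd hz, padicValRat.pow,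
    show padicValRat 2 2 = 1 by simpa using padicValRat.self (p := 2) one_lt_two]
  simp

theorem stmt19_general (n m : ℕ) (hn : 3 ≤ n)
    (h24 : m % 24 = 22)
    (j3 : Fin n → ℕ)
    (hj3 : j3 = fun k : Fin n =>
      if (k : ℕ) = n - 3 then 1
      else if (k : ℕ) = n - 2 then (m - 7) / 3
      else if (k : ℕ) = n - 1 then 1 else 0) :
    inJ n m j3 ∧ Pprod n m j3 ≠ 0 ∧
      V n m j3 = ((2 * (m - 1)) / 3 : ℕ) - (sdig ((m - 1) / 3) : ℤ) - 1 := by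
  obtain ⟨t, rfl⟩ : ∃ t, m = 24 * t + 22 := ⟨m / 24, by omega⟩
  obtain rfl : j3 = tailVec n 1 (8 * t + 5) 1 := by
    rw [hj3, show (24 * t + 22 - 7) / 3 = 8 * t + 5 by omega]
    rfl
  have hP : Pprod n (24 * t + 22) (tailVec n 1 (8 * t + 5) 1) =
      ((12 * t + 11 : ℤ) : ℚ) / 2 ^ 2 * genBinom (((12 * t + 7 : ℤ) : ℚ) / 2 ^ 1) (8 * t + 5) *
        ((-(4 * t + 3) : ℤ) : ℚ) := by
    rw [Pprod_tailVec hn, genBinom_one, genBinom_one]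
    push_cast
    ring_nf
  have hA := padicValRat_two_odd_div_two_pow (z := 12 * t + 11) ⟨6 * t + 5, by ring⟩ 2
  have hB := padicValRat_two_odd_div_two_pow (z := 12 * t + 7) ⟨6 * t + 3, by ring⟩ 1
  have hC := padicValRat_two_of_odd (z := -(4 * t + 3)) ⟨-(2 * t + 2), by ring⟩
  have hA_ne := ne_zero_of_padicValRat_neg (by rw [hA]; norm_num)
  obtain ⟨hB_ne, hBr⟩ := padicValRat_two_genBinom_of_neg (by rw [hB]; norm_num) (8 * t + 5)
  have hC_ne : ((-(4 * t + 3) : ℤ) : ℚ) ≠ 0 := Int.cast_ne_zero.2 (by omega)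
  refine ⟨(inJ_tailVec_iff hn _).2 (by omega), hP ▸ mul_ne_zero (mul_ne_zero hA_ne hB_ne) hC_ne, ?_⟩
  rw [V, hP, padicValRat.mul (mul_ne_zero hA_ne hB_ne) hC_ne, padicValRat.mul hA_ne hB_ne, hA, hBr,
    hB, hC, show (24 * t + 22 - 1) / 3 = 8 * t + 7 by omega,
    show 2 * (24 * t + 22 - 1) / 3 = 16 * t + 14 by omega, sdig_eight_mul_add_five,
    sdig_eight_mul_add_seven]
  push_cast
  ring

/-- If `m ≡ 22 mod 24`, then `j‴ = (0, …, 1, (m-7)/3, 1)` lies in `J`,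
`P(j‴) ≠ 0`, and `V(j‴) = (2/3)(m-1) - s((m-1)/3) - 1`. -/
theorem stmt19 (n m : ℕ) (hn : 3 ≤ n) (hm : 1 ≤ m) (hmn : m ≤ 2 ^ (n + 1) - 3)
    (h24 : m % 24 = 22)
    (j3 : Fin n → ℕ)
    (hj3 : j3 = fun k : Fin n =>
      if (k : ℕ) = n - 3 then 1
      else if (k : ℕ) = n - 2 then (m - 7) / 3
      else if (k : ℕ) = n - 1 then 1 else 0) :
    inJ n m j3 ∧ Pprod n m j3 ≠ 0 ∧
      V n m j3 = ((2 * (m - 1)) / 3 : ℕ) - (sdig ((m - 1) / 3) : ℤ) - 1 :=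
  stmt19_general n m hn h24 j3 hj3
end
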